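/- arXiv:2005.08594 — 2 statements merged into one kernel-verified Lean document; each statement's English description precedes it below -/
import Mathlib

section
/- Let G be a simple graph on vertex set [n] and v an internal vertex of G (i.e., v lies in more than one maximal clique of G). Then the binomial edge ideal satisfies J_G = J_{G_v} ∩ ((x_v, y_v) + J_{G∖v}). -/
open SimpleGraph

/-- The binomial edge ideal of a graph `G`, in `K[x_i, y_i : i ∈ V]`. -/
noncomputable def binomialEdgeIdeal (K : Type*) [Field K] {V : Type*}
    (G : SimpleGraph V) : Ideal (MvPolynomial (V ⊕ V) K) :=
  Ideal.span {f | ∃ i j : V, G.Adj i j ∧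
    f = MvPolynomial.X (Sum.inl i) * MvPolynomial.X (Sum.inr j)
      - MvPolynomial.X (Sum.inl j) * MvPolynomial.X (Sum.inr i)}

/-- The graph `G_v`: `G` together with all edges between neighbours of `v`. -/
def neighborhoodCompletion {V : Type*} (G : SimpleGraph V) (v : V) : SimpleGraph V :=
  G ⊔ SimpleGraph.fromRel (fun u w => G.Adj v u ∧ G.Adj v w)

/-- The graph `G ∖ v`, on the same vertex set: all edges of `G` not meeting `v`. -/
def deleteVertex {V : Type*} (G : SimpleGraph V) (v : V) : SimpleGraph V :=
  SimpleGraph.fromRel (fun u w => G.Adj u w ∧ u ≠ v ∧ w ≠ v)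

/-- `v` is an internal vertex of `G`: it lies in more than one maximal clique. -/
def IsInternalVertex {V : Type*} (G : SimpleGraph V) (v : V) : Prop :=
  ∃ s t : Set V, s ≠ t ∧ Maximal G.IsClique s ∧ Maximal G.IsClique t ∧ v ∈ s ∧ v ∈ t

namespace OhtaniAux

open MvPolynomial

variable {V : Type*} [DecidableEq V] (K : Type) [Field K]

/-- The binomial generator attached to a pair of vertices. -/
noncomputable def fg (i j : V) : MvPolynomial (V ⊕ V) K :=
  MvPolynomial.X (Sum.inl i) * MvPolynomial.X (Sum.inr j)
    - MvPolynomial.X (Sum.inl j) * MvPolynomial.X (Sum.inr i)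

lemma mem_bei {G : SimpleGraph V} {i j : V} (h : G.Adj i j) :
    fg K i j ∈ binomialEdgeIdeal K G :=
  Ideal.subset_span ⟨i, j, h, rfl⟩

lemma bei_mono {G H : SimpleGraph V} (h : G ≤ H) :
    binomialEdgeIdeal K G ≤ binomialEdgeIdeal K H :=
  Ideal.span_mono fun f ⟨i, j, hij, hf⟩ => ⟨i, j, h hij, hf⟩

lemma delete_le (G : SimpleGraph V) (v : V) : deleteVertex G v ≤ G := by
  intro a b hab
  rw [deleteVertex, fromRel_adj] at hab
  rcases hab.2 with ⟨h, _⟩ | ⟨h, _⟩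
  exacts [h, h.symm]

/-- The substitution `x_v ↦ 0, y_v ↦ 0`. -/
noncomputable def pr (v : V) :
    MvPolynomial (V ⊕ V) K →ₐ[K] MvPolynomial (V ⊕ V) K :=
  aeval fun s => if s = Sum.inl v ∨ s = Sum.inr v then 0 else MvPolynomial.X s

lemma pr_X_inl_self (v : V) : pr K v (MvPolynomial.X (Sum.inl v)) = 0 := by
  simp [pr]

lemma pr_X_inr_self (v : V) : pr K v (MvPolynomial.X (Sum.inr v)) = 0 := by
  simp [pr]

lemma pr_X_ne (v : V) (s : V ⊕ V) (h : s ≠ Sum.inl v) (h' : s ≠ Sum.inr v) :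
    pr K v (MvPolynomial.X s) = MvPolynomial.X s := by
  simp [pr, h, h']

lemma pr_fg_ne (v : V) {i j : V} (hi : i ≠ v) (hj : j ≠ v) :
    pr K v (fg K i j) = fg K i j := by
  simp [pr, fg, hi, hj]

lemma pr_fg_left (v : V) (j : V) : pr K v (fg K v j) = 0 := by
  by_cases hj : j = v
  · subst hj; simp [pr, fg]
  · simp [pr, fg, hj]

lemma pr_fg_right (v : V) (i : V) : pr K v (fg K i v) = 0 := by
  by_cases hi : i = v
  · subst hi; simp [pr, fg]
  · simp [pr, fg, hi]

lemma sub_pr_mem (v : V) (p : MvPolynomial (V ⊕ V) K) :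
    p - pr K v p ∈
      Ideal.span {MvPolynomial.X (Sum.inl v), MvPolynomial.X (Sum.inr v)} := by
  set I : Ideal (MvPolynomial (V ⊕ V) K) :=
    Ideal.span {MvPolynomial.X (Sum.inl v), MvPolynomial.X (Sum.inr v)} with hI
  have hx : (MvPolynomial.X (Sum.inl v) : MvPolynomial (V ⊕ V) K) ∈ I :=
    Ideal.subset_span (by simp)
  have hy : (MvPolynomial.X (Sum.inr v) : MvPolynomial (V ⊕ V) K) ∈ I :=
    Ideal.subset_span (by simp)
  have key : (Ideal.Quotient.mkₐ K I).comp (pr K v) = Ideal.Quotient.mkₐ K I := by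
    apply MvPolynomial.algHom_ext
    intro s
    simp only [AlgHom.comp_apply, Ideal.Quotient.mkₐ_eq_mk]
    by_cases h1 : s = Sum.inl v
    · subst h1
      rw [pr_X_inl_self, map_zero]
      exact (Ideal.Quotient.eq_zero_iff_mem.mpr hx).symm
    · by_cases h2 : s = Sum.inr v
      · subst h2
        rw [pr_X_inr_self, map_zero]
        exact (Ideal.Quotient.eq_zero_iff_mem.mpr hy).symm
      · rw [pr_X_ne K v s h1 h2]
  have := AlgHom.congr_fun key p
  simp only [AlgHom.comp_apply, Ideal.Quotient.mkₐ_eq_mk] at this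
  exact Ideal.Quotient.eq.mp this.symm

end OhtaniAux

open OhtaniAux MvPolynomial in
/-- **Ohtani's lemma.** If `v` is an internal vertex of `G`, then
`J_G = J_{G_v} ∩ ((x_v, y_v) + J_{G ∖ v})`. -/
theorem binomialEdgeIdeal_eq_inter {n : ℕ} {K : Type} [Field K]
    (G : SimpleGraph (Fin n)) (v : Fin n) (hv : IsInternalVertex G v) :
    binomialEdgeIdeal K G =
      binomialEdgeIdeal K (neighborhoodCompletion G v) ⊓
        (Ideal.span {MvPolynomial.X (Sum.inl v), MvPolynomial.X (Sum.inr v)} +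
          binomialEdgeIdeal K (deleteVertex G v)) := by
  classical
  set R := MvPolynomial (Fin n ⊕ Fin n) K
  set JG := binomialEdgeIdeal K G with hJG
  set A : Ideal R :=
    Ideal.span {MvPolynomial.X (Sum.inl v), MvPolynomial.X (Sum.inr v)} with hA
  -- the ideal generated by binomials between neighbours of v
  set IN : Ideal R :=
    Ideal.span {f | ∃ u w : Fin n, G.Adj v u ∧ G.Adj v w ∧ f = fg K u w} with hIN
  have hGle : G ≤ neighborhoodCompletion G v := le_sup_left
  -- products of x_v, y_v with elements of IN are in JG
  have claim_xy : ∀ z ∈ IN,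
      MvPolynomial.X (Sum.inl v) * z ∈ JG ∧ MvPolynomial.X (Sum.inr v) * z ∈ JG := by
    intro z hz
    refine Submodule.span_induction ?_ ?_ ?_ ?_ hz
    · rintro f ⟨u, w, hu, hw, rfl⟩
      constructor
      · have e : MvPolynomial.X (Sum.inl v) * fg K u w =
            MvPolynomial.X (Sum.inl u) * fg K v w -
              MvPolynomial.X (Sum.inl w) * fg K v u := by
          unfold fg; ring
        rw [e]
        exact sub_mem (Ideal.mul_mem_left _ _ (mem_bei K hw))
          (Ideal.mul_mem_left _ _ (mem_bei K hu))
      · have e : MvPolynomial.X (Sum.inr v) * fg K u w =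
            MvPolynomial.X (Sum.inr u) * fg K v w -
              MvPolynomial.X (Sum.inr w) * fg K v u := by
          unfold fg; ring
        rw [e]
        exact sub_mem (Ideal.mul_mem_left _ _ (mem_bei K hw))
          (Ideal.mul_mem_left _ _ (mem_bei K hu))
    · simp
    · rintro x y _ _ ⟨hx1, hx2⟩ ⟨hy1, hy2⟩
      exact ⟨by rw [mul_add]; exact add_mem hx1 hy1,
             by rw [mul_add]; exact add_mem hx2 hy2⟩
    · rintro a x _ ⟨hx1, hx2⟩
      refine ⟨?_, ?_⟩
      · rw [smul_eq_mul, mul_left_comm]; exact Ideal.mul_mem_left _ _ hx1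
      · rw [smul_eq_mul, mul_left_comm]; exact Ideal.mul_mem_left _ _ hx2
  -- pr preserves IN
  have claim_pr : ∀ z ∈ IN, pr K v z ∈ IN := by
    intro z hz
    refine Submodule.span_induction ?_ ?_ ?_ ?_ hz
    · rintro f ⟨u, w, hu, hw, rfl⟩
      rw [pr_fg_ne K v hu.ne' hw.ne']
      exact Ideal.subset_span ⟨u, w, hu, hw, rfl⟩
    · simp
    · intro x y _ _ hx hy; rw [map_add]; exact add_mem hx hy
    · intro a x _ hx
      rw [smul_eq_mul, map_mul]; exact Ideal.mul_mem_left _ _ hx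
  -- z - pr z ∈ JG for z ∈ IN
  have claim_sub : ∀ z ∈ IN, z - pr K v z ∈ JG := by
    intro z hz
    refine Submodule.span_induction ?_ ?_ ?_ ?_ hz
    · rintro f ⟨u, w, hu, hw, rfl⟩
      rw [pr_fg_ne K v hu.ne' hw.ne', sub_self]
      exact zero_mem _
    · simp
    · intro x y _ _ hx hy
      have e : x + y - pr K v (x + y) = (x - pr K v x) + (y - pr K v y) := by
        rw [map_add]; ring
      rw [e]; exact add_mem hx hy
    · intro a x hx ih
      obtain ⟨p, q, hpq⟩ := Ideal.mem_span_pair.mp (sub_pr_mem K v a)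
      obtain ⟨h1, h2⟩ := claim_xy _ (claim_pr x hx)
      have e : a • x - pr K v (a • x) =
          a * (x - pr K v x) +
            (p * (MvPolynomial.X (Sum.inl v) * pr K v x) +
              q * (MvPolynomial.X (Sum.inr v) * pr K v x)) := by
        rw [smul_eq_mul, map_mul]
        linear_combination (-(pr K v x)) * hpq
      rw [e]
      exact add_mem (Ideal.mul_mem_left _ _ ih)
        (add_mem (Ideal.mul_mem_left _ _ h1) (Ideal.mul_mem_left _ _ h2))
  -- J_{G_v} ≤ JG ⊔ IN
  have claim_JGv : binomialEdgeIdeal K (neighborhoodCompletion G v) ≤ JG ⊔ IN := by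
    rw [binomialEdgeIdeal]
    refine Ideal.span_le.mpr ?_
    rintro f ⟨i, j, hij, rfl⟩
    rw [neighborhoodCompletion, sup_adj] at hij
    rcases hij with h | h
    · exact Submodule.mem_sup_left (mem_bei K h)
    · rw [fromRel_adj] at h
      rcases h.2 with ⟨h1, h2⟩ | ⟨h1, h2⟩
      · exact Submodule.mem_sup_right (Ideal.subset_span ⟨i, j, h1, h2, rfl⟩)
      · exact Submodule.mem_sup_right (Ideal.subset_span ⟨i, j, h2, h1, rfl⟩)
  -- pr maps A ⊔ JG into JG
  have claim_map : ∀ z ∈ A ⊔ JG, pr K v z ∈ JG := by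
    intro z hz
    obtain ⟨a, ha, b, hb, hab⟩ := Submodule.mem_sup.mp hz
    have hpa : pr K v a = 0 := by
      obtain ⟨p, q, hpq⟩ := Ideal.mem_span_pair.mp ha
      rw [← hpq]
      simp [pr_X_inl_self, pr_X_inr_self]
    have hpb : pr K v b ∈ JG := by
      refine Submodule.span_induction ?_ ?_ ?_ ?_ hb
      · rintro f ⟨i, j, hij, rfl⟩
        rw [show (MvPolynomial.X (Sum.inl i) * MvPolynomial.X (Sum.inr j)
            - MvPolynomial.X (Sum.inl j) * MvPolynomial.X (Sum.inr i) : R) = fg K i j from rfl]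
        by_cases hi : i = v
        · rw [hi, pr_fg_left]; exact zero_mem _
        · by_cases hj : j = v
          · rw [hj, pr_fg_right]; exact zero_mem _
          · rw [pr_fg_ne K v hi hj]; exact mem_bei K hij
      · simp
      · intro x y _ _ hx hy; rw [map_add]; exact add_mem hx hy
      · intro c x _ hx; rw [smul_eq_mul, map_mul]; exact Ideal.mul_mem_left _ _ hx
    rw [← hab, map_add, hpa, zero_add]
    exact hpb
  -- main proof
  apply le_antisymm
  · refine le_inf (bei_mono K hGle) ?_
    rw [hJG, binomialEdgeIdeal, Submodule.add_eq_sup]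
    refine Ideal.span_le.mpr ?_
    rintro f ⟨i, j, hij, rfl⟩
    by_cases hi : i = v
    · rw [hi]
      exact Submodule.mem_sup_left (Ideal.mem_span_pair.mpr
        ⟨MvPolynomial.X (Sum.inr j), -MvPolynomial.X (Sum.inl j), by ring⟩)
    · by_cases hj : j = v
      · rw [hj]
        exact Submodule.mem_sup_left (Ideal.mem_span_pair.mpr
          ⟨-MvPolynomial.X (Sum.inr i), MvPolynomial.X (Sum.inl i), by ring⟩)
      · refine Submodule.mem_sup_right (Ideal.subset_span ⟨i, j, ?_, rfl⟩)
        rw [deleteVertex, fromRel_adj]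
        exact ⟨hij.ne, Or.inl ⟨hij, hi, hj⟩⟩
  · intro g hg
    obtain ⟨hg1, hg2⟩ := Submodule.mem_inf.mp hg
    rw [Submodule.add_eq_sup] at hg2
    obtain ⟨r, hr, h, hh, hrh⟩ := Submodule.mem_sup.mp hg2
    have hhJG : h ∈ JG := bei_mono K (delete_le G v) hh
    have hrGv : r ∈ binomialEdgeIdeal K (neighborhoodCompletion G v) := by
      have : r = g - h := by rw [← hrh]; ring
      rw [this]
      exact sub_mem hg1 (bei_mono K hGle hhJG)
    obtain ⟨a, ha, m, hm, ham⟩ := Submodule.mem_sup.mp (claim_JGv hrGv)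
    have hmAJ : m ∈ A ⊔ JG := by
      have : m = r - a := by rw [← ham]; ring
      rw [this]
      exact sub_mem (Submodule.mem_sup_left hr) (Submodule.mem_sup_right ha)
    have hmJG : m ∈ JG := by
      have h1 := claim_map m hmAJ
      have h2 := claim_sub m hm
      have := add_mem h1 h2
      simpa using this
    have hrJG : r ∈ JG := by rw [← ham]; exact add_mem ha hmJG
    rw [← hrh]
    exact add_mem hrJG hhJG
end

section
/- Let G be a connected graph whose every block is a cycle or a clique and which has at least two blocks, and let B_s be a leaf of the block graph B(G), corresponding to an induced subgraph H = H_1 ∪_v ⋯ ∪_v H_l of G (l ≥ 2 blocks glued at a common cut vertex v). Then there exists an index i ∈ [l] such that for every j ≠ i, all vertices of H_j except possibly v belong to no block of G other than H_j. -/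
open SimpleGraph

/-- `v` is a cut vertex of `G`: some two vertices distinct from `v` are connected in `G`
but not after deleting `v`. -/
def SimpleGraph.IsCutVertex {V : Type*} (G : SimpleGraph V) (v : V) : Prop :=
  ∃ u w : V, ∃ (hu : u ≠ v) (hw : w ≠ v), G.Reachable u w ∧
    ¬ (G.induce {x | x ≠ v}).Reachable ⟨u, hu⟩ ⟨w, hw⟩

/-- `B` is (the vertex set of) a block of `G`: a maximal connected subgraph with no
cut vertex. -/
def SimpleGraph.IsBlock {V : Type*} (G : SimpleGraph V) (B : Set V) : Prop :=
  B.Nonempty ∧ (G.induce B).Connected ∧ (∀ v, ¬ (G.induce B).IsCutVertex v) ∧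
    ∀ C : Set V, B ⊆ C → (G.induce C).Connected →
      (∀ v, ¬ (G.induce C).IsCutVertex v) → B = C

/-- The block `B` of `G` is a cycle of length `r`. -/
def SimpleGraph.IsCycleBlock {V : Type*} (G : SimpleGraph V) (B : Set V) (r : ℕ) : Prop :=
  G.IsBlock B ∧ Nonempty ((G.induce B) ≃g cycleGraph r)

/-- The block graph `B(G)` of `G`: vertices are the blocks of `G`, two blocks being
adjacent exactly when they share a common cut vertex of `G`. -/
def blockGraphOf {V : Type*} (G : SimpleGraph V) :
    SimpleGraph {B : Set V // G.IsBlock B} :=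
  SimpleGraph.fromRel (fun B₁ B₂ => ∃ v : V, v ∈ B₁.1 ∧ v ∈ B₂.1 ∧ G.IsCutVertex v)

/-!
Blocks meet like the vertices of a tree. A path between two vertices of a block `D` stays
inside `D`: otherwise `D` together with the path would still be connected without cut vertex,
against the maximality of `D`. Hence two blocks share at most one vertex, a vertex lying in two
blocks is a cut vertex, and a chain of blocks (consecutive ones meeting) leading from a vertex `w`
of a block `H` to another vertex `v` of `H` passes through `H`.

So if a block `Hⱼ` of the leaf has a vertex `w ≠ v` lying in another block `B`, then `Hⱼ`
separates `B` from the other blocks of the leaf in `B(G)`, i.e. `Hⱼ` is a cut vertex of `B(G)`.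
A leaf of the block graph contains at most one cut vertex of `B(G)`; take `Hᵢ` to be it, or any
block of the leaf if there is none.
-/

namespace SimpleGraph

variable {V : Type*} {G : SimpleGraph V}

lemma Reachable.exists_walk_support_subset {s : Set V} {x y : s}
    (h : (G.induce s).Reachable x y) : ∃ q : G.Walk x y, ∀ u ∈ q.support, u ∈ s := by
  obtain ⟨p⟩ := h
  have hsupp : ∀ u ∈ (p.map (Embedding.induce s).toHom).support, u ∈ s := by
    simp only [Walk.support_map, List.mem_map]
    rintro _ ⟨u, -, rfl⟩
    exact u.2
  exact ⟨_, hsupp⟩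

lemma Walk.reachable_induce_of_support_subset {s : Set V} {x y : V} (q : G.Walk x y)
    (hq : ∀ u ∈ q.support, u ∈ s) (hx : x ∈ s) (hy : y ∈ s) :
    (G.induce s).Reachable ⟨x, hx⟩ ⟨y, hy⟩ :=
  (q.connected_induce_support.preconnected ⟨x, q.start_mem_support⟩
    ⟨y, q.end_mem_support⟩).map (induceHomOfLE G hq).toHom

lemma preconnected_induce_of_forall_walk {S U : Set V} (hS : (G.induce S).Preconnected)
    (hSU : S ⊆ U) (h : ∀ y ∈ U, ∃ s ∈ S, ∃ q : G.Walk y s, ∀ u ∈ q.support, u ∈ U) :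
    (G.induce U).Preconnected := by
  have toS : ∀ (y : U), ∃ s : S, (G.induce U).Reachable y ⟨s, hSU s.2⟩ := fun y => by
    obtain ⟨s, hs, q, hq⟩ := h y y.2
    exact ⟨⟨s, hs⟩, q.reachable_induce_of_support_subset hq _ _⟩
  intro x y
  obtain ⟨s, hxs⟩ := toS x
  obtain ⟨t, hyt⟩ := toS y
  exact hxs.trans (((hS s t).map (induceHomOfLE G hSU).toHom).trans hyt.symm)

lemma Walk.IsPath.exists_walk_avoiding {a b : V} {p : G.Walk a b} (hp : p.IsPath)
    {y z : V} (hy : y ∈ p.support) (hyz : y ≠ z) :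
    (∃ q : G.Walk y a, ∀ u ∈ q.support, u ∈ p.support ∧ u ≠ z) ∨
      (∃ q : G.Walk y b, ∀ u ∈ q.support, u ∈ p.support ∧ u ≠ z) := by
  classical
  have hnodup := hp.support_nodup
  rw [← p.take_spec hy, Walk.support_append, List.nodup_append] at hnodup
  by_cases hz : z ∈ (p.takeUntil y hy).support
  · refine Or.inr ⟨p.dropUntil y hy, fun u hu => ⟨p.support_dropUntil_subset_support hy hu, ?_⟩⟩
    rintro rfl
    rw [← Walk.cons_tail_support, List.mem_cons] at hu
    exact hu.elim hyz.symm fun hu => hnodup.2.2 _ hz _ hu rfl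
  · refine Or.inl ⟨(p.takeUntil y hy).reverse, fun u hu => ?_⟩
    rw [Walk.support_reverse, List.mem_reverse] at hu
    exact ⟨p.support_takeUntil_subset_support hy hu, by rintro rfl; exact hz hu⟩

lemma IsBlock.eq_of_subset {A B : Set V} (hA : G.IsBlock A) (hB : G.IsBlock B) (h : A ⊆ B) :
    A = B :=
  hA.2.2.2 B h hB.2.1 hB.2.2.1

lemma IsBlock.preconnected_induce_diff {B : Set V} (hB : G.IsBlock B) (z : V) :
    (G.induce (B \ {z})).Preconnected := by
  by_cases hz : z ∈ B
  · rintro ⟨x, hxB, hxz⟩ ⟨y, hyB, hyz⟩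
    have hx : (⟨x, hxB⟩ : B) ≠ ⟨z, hz⟩ := fun h => hxz (congrArg Subtype.val h)
    have hy : (⟨y, hyB⟩ : B) ≠ ⟨z, hz⟩ := fun h => hyz (congrArg Subtype.val h)
    have hr : ((G.induce B).induce {u | u ≠ ⟨z, hz⟩}).Reachable ⟨_, hx⟩ ⟨_, hy⟩ := by
      by_contra hr
      exact hB.2.2.1 ⟨z, hz⟩ ⟨_, _, hx, hy, hB.2.1.preconnected _ _, hr⟩
    exact hr.map (⟨fun u => ⟨u.1.1, u.1.2, fun h => u.2 (Subtype.ext h)⟩, id⟩ :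
      (G.induce B).induce {u | u ≠ ⟨z, hz⟩} →g G.induce (B \ {z}))
  · rw [Set.sdiff_singleton_eq_self hz]
    exact hB.2.1.preconnected

lemma not_isCutVertex_induce_of_preconnected_diff {U : Set V}
    (h : ∀ z, (G.induce (U \ {z})).Preconnected) (c : U) : ¬ (G.induce U).IsCutVertex c := by
  rintro ⟨x, y, hx, hy, -, hxy⟩
  have hx' : x.1 ∈ U \ {c.1} := ⟨x.2, fun h => hx (Subtype.ext h)⟩
  have hy' : y.1 ∈ U \ {c.1} := ⟨y.2, fun h => hy (Subtype.ext h)⟩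
  exact hxy ((h c ⟨_, hx'⟩ ⟨_, hy'⟩).map
    (⟨fun u => ⟨⟨u.1, u.2.1⟩, fun h => u.2.2 (congrArg Subtype.val h)⟩, id⟩ :
      G.induce (U \ {c.1}) →g (G.induce U).induce {u | u ≠ c}))

lemma IsBlock.eq_of_superset {D U : Set V} (hD : G.IsBlock D) (hDU : D ⊆ U)
    (hU : (G.induce U).Connected) (h : ∀ z, (G.induce (U \ {z})).Preconnected) : D = U :=
  hD.2.2.2 U hDU hU (not_isCutVertex_induce_of_preconnected_diff h)

lemma IsBlock.eq_of_mem_of_mem {D F : Set V} (hD : G.IsBlock D) (hF : G.IsBlock F) {a b : V}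
    (hab : a ≠ b) (haD : a ∈ D) (haF : a ∈ F) (hbD : b ∈ D) (hbF : b ∈ F) : D = F := by
  have hDF : D = D ∪ F := by
    refine hD.eq_of_superset Set.subset_union_left
      (induce_union_connected hD.2.1.preconnected hF.2.1.preconnected ⟨a, haD, haF⟩) fun z => ?_
    obtain ⟨c, hcD, hcF, hcz⟩ : ∃ c ∈ D, c ∈ F ∧ c ≠ z := by
      by_cases haz : a = z
      · exact ⟨b, hbD, hbF, haz ▸ hab.symm⟩
      · exact ⟨a, haD, haF, haz⟩
    rw [Set.union_sdiff_distrib]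
    exact (induce_union_connected (hD.preconnected_induce_diff z) (hF.preconnected_induce_diff z)
      ⟨c, ⟨hcD, hcz⟩, hcF, hcz⟩).preconnected
  exact (hF.eq_of_subset hD (hDF ▸ Set.subset_union_right)).symm

lemma IsBlock.support_subset_of_isPath {D : Set V} (hD : G.IsBlock D) {a b : V}
    {p : G.Walk a b} (hp : p.IsPath) (ha : a ∈ D) (hb : b ∈ D) :
    ∀ x ∈ p.support, x ∈ D := by
  set P : Set V := {x | x ∈ p.support}
  have hDP : D = D ∪ P := by
    refine hD.eq_of_superset Set.subset_union_left (induce_union_connected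
      hD.2.1.preconnected p.connected_induce_support.preconnected ⟨a, ha, p.start_mem_support⟩)
      fun z => preconnected_induce_of_forall_walk (hD.preconnected_induce_diff z)
        (Set.sdiff_subset_sdiff_left Set.subset_union_left) ?_
    rintro y ⟨hyD | hyP, hyz⟩
    · exact ⟨y, ⟨hyD, hyz⟩, Walk.nil, by simpa using ⟨Or.inl hyD, hyz⟩⟩
    · rcases hp.exists_walk_avoiding hyP hyz with ⟨q, hq⟩ | ⟨q, hq⟩
      · exact ⟨a, ⟨ha, (hq a q.end_mem_support).2⟩, q,
          fun u hu => ⟨Or.inr (hq u hu).1, (hq u hu).2⟩⟩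
      · exact ⟨b, ⟨hb, (hq b q.end_mem_support).2⟩, q,
          fun u hu => ⟨Or.inr (hq u hu).1, (hq u hu).2⟩⟩
  intro x hx
  rw [hDP]
  exact Or.inr hx

lemma IsBlock.exists_mem_darts_fst_mem_snd_eq {D : Set V} (hD : G.IsBlock D) {a b : V}
    (p : G.Walk a b) (ha : a ∈ D) (hb : b ∈ D) (hab : a ≠ b) :
    ∃ d ∈ p.darts, d.fst ∈ D ∧ d.snd = b := by
  classical
  have hnil : ¬ p.bypass.Nil := Walk.not_nil_of_ne hab
  have hlast := Walk.lastDart_mem_darts hnil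
  exact ⟨_, p.darts_bypass_subset_darts hlast, hD.support_subset_of_isPath p.bypass_isPath
    ha hb _ (Walk.dart_fst_mem_support_of_mem_darts _ hlast), rfl⟩

lemma IsBlock.isCutVertex_of_mem_of_mem {B₁ B₂ : Set V} (hB₁ : G.IsBlock B₁)
    (hB₂ : G.IsBlock B₂) (hne : B₁ ≠ B₂) {w : V} (hw₁ : w ∈ B₁) (hw₂ : w ∈ B₂) :
    G.IsCutVertex w := by
  have exists_ne : ∀ {A C : Set V}, G.IsBlock A → G.IsBlock C → A ≠ C → w ∈ C →
      ∃ u ∈ A, u ≠ w := by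
    intro A C hA hC hAC hwC
    by_contra! h
    exact hAC (hA.eq_of_subset hC fun u hu => h u hu ▸ hwC)
  obtain ⟨u, hu₁, huw⟩ := exists_ne hB₁ hB₂ hne hw₂
  obtain ⟨x, hx₂, hxw⟩ := exists_ne hB₂ hB₁ hne.symm hw₁
  obtain ⟨Q, hQ⟩ := (hB₂.2.1.preconnected ⟨x, hx₂⟩ ⟨w, hw₂⟩).exists_walk_support_subset
  refine ⟨u, x, huw, hxw, ?_, fun hux => ?_⟩
  · obtain ⟨P, -⟩ := (hB₁.2.1.preconnected ⟨u, hu₁⟩ ⟨w, hw₁⟩).exists_walk_support_subset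
    exact ⟨P.append Q.reverse⟩
  -- a walk from `u` to `x` avoiding `w`, continued inside `B₂` to `w`, must enter `w` from `B₁`
  obtain ⟨P, hP⟩ := hux.exists_walk_support_subset
  obtain ⟨d, hd, hd₁, hdw⟩ := hB₁.exists_mem_darts_fst_mem_snd_eq (P.append Q) hu₁ hw₁ huw
  rw [Walk.darts_append, List.mem_append] at hd
  rcases hd with hd | hd
  · exact hP _ (P.dart_snd_mem_support_of_mem_darts hd) hdw
  · exact hne (hB₁.eq_of_mem_of_mem hB₂ (fun h => d.adj.ne (h.trans hdw.symm)) hd₁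
      (hQ _ (Q.dart_fst_mem_support_of_mem_darts hd)) hw₁ hw₂)

end SimpleGraph

section BlockGraph

variable {V : Type*} {G : SimpleGraph V}

lemma exists_walk_of_blockGraphOf_walk {F F' : {B : Set V // G.IsBlock B}}
    (W : (blockGraphOf G).Walk F F') {x y : V} (hx : x ∈ F.1) (hy : y ∈ F'.1) :
    ∃ q : G.Walk x y, ∀ d ∈ q.darts, ∃ B ∈ W.support, d.fst ∈ B.1 ∧ d.snd ∈ B.1 := by
  have walk_in : ∀ (B : {B : Set V // G.IsBlock B}) {x y : V}, x ∈ B.1 → y ∈ B.1 →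
      ∃ q : G.Walk x y, ∀ d ∈ q.darts, d.fst ∈ B.1 ∧ d.snd ∈ B.1 := fun B x y hx hy => by
    obtain ⟨q, hq⟩ := (B.2.2.1.preconnected ⟨x, hx⟩ ⟨y, hy⟩).exists_walk_support_subset
    exact ⟨q, fun d hd => ⟨hq _ (q.dart_fst_mem_support_of_mem_darts hd),
      hq _ (q.dart_snd_mem_support_of_mem_darts hd)⟩⟩
  induction W generalizing x with
  | nil =>
    obtain ⟨q, hq⟩ := walk_in _ hx hy
    exact ⟨q, fun d hd => ⟨_, Walk.start_mem_support _, hq d hd⟩⟩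
  | @cons F F₁ _ hadj W ih =>
    obtain ⟨c, hcF, hcF₁⟩ : ∃ c, c ∈ F.1 ∧ c ∈ F₁.1 := by
      rcases (SimpleGraph.fromRel_adj _ _ _ |>.mp hadj).2 with ⟨c, h, h', -⟩ | ⟨c, h', h, -⟩
      all_goals exact ⟨c, h, h'⟩
    obtain ⟨q₁, hq₁⟩ := walk_in F hx hcF
    obtain ⟨q₂, hq₂⟩ := ih hcF₁ hy
    refine ⟨q₁.append q₂, fun d hd => ?_⟩
    rw [Walk.darts_append, List.mem_append] at hd
    rcases hd with hd | hd
    · exact ⟨F, Walk.start_mem_support _, hq₁ d hd⟩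
    · obtain ⟨B, hB, hdB⟩ := hq₂ d hd
      exact ⟨B, List.mem_cons_of_mem _ hB, hdB⟩

lemma blockGraphOf_adj_of_mem {B H : {B : Set V // G.IsBlock B}} (hBH : B ≠ H) {u : V}
    (huB : u ∈ B.1) (huH : u ∈ H.1) : (blockGraphOf G).Adj B H :=
  (SimpleGraph.fromRel_adj _ _ _).mpr ⟨hBH, Or.inl ⟨u, huB, huH,
    B.2.isCutVertex_of_mem_of_mem H.2 (fun h => hBH (Subtype.ext h)) huB huH⟩⟩

lemma isCutVertex_blockGraphOf {H B B' : {B : Set V // G.IsBlock B}} (hB : B ≠ H)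
    (hB' : B' ≠ H) {w v : V} (hwv : w ≠ v) (hwH : w ∈ H.1) (hwB : w ∈ B.1) (hvH : v ∈ H.1)
    (hvB' : v ∈ B'.1) : (blockGraphOf G).IsCutVertex H := by
  refine ⟨B, B', hB, hB', (blockGraphOf_adj_of_mem hB hwB hwH).reachable.trans
    (blockGraphOf_adj_of_mem hB' hvB' hvH).reachable.symm, fun hr => ?_⟩
  obtain ⟨W, hW⟩ := hr.exists_walk_support_subset
  obtain ⟨q, hq⟩ := exists_walk_of_blockGraphOf_walk W hwB hvB'
  obtain ⟨d, hd, hdH, hdv⟩ := H.2.exists_mem_darts_fst_mem_snd_eq q hwH hvH hwv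
  obtain ⟨K, hK, hdK⟩ := hq d hd
  exact hW K hK (Subtype.ext (K.2.eq_of_mem_of_mem H.2 d.adj.ne hdK.1 hdH hdK.2 (hdv ▸ hvH)))

end BlockGraph

theorem exists_block_of_leaf_general {V : Type*} (G : SimpleGraph V)
    (S : Set {B : Set V // G.IsBlock B})
    (hleaf : (blockGraphOf G).IsBlock S ∧
      {b | b ∈ S ∧ (blockGraphOf G).IsCutVertex b}.Subsingleton)
    (hS : S.Nontrivial) (v : V)
    (hv : ∀ b₁ b₂, b₁ ∈ S → b₂ ∈ S → b₁ ≠ b₂ → b₁.1 ∩ b₂.1 = {v}) :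
    ∃ Hi ∈ S, ∀ Hj ∈ S, Hj ≠ Hi →
      ∀ w ∈ Hj.1, w ≠ v → ∀ B : Set V, G.IsBlock B → w ∈ B → B = Hj.1 := by
  obtain ⟨Hi, hHi, hcut⟩ : ∃ Hi ∈ S, ∀ Hj ∈ S, (blockGraphOf G).IsCutVertex Hj → Hj = Hi := by
    by_cases h : ∃ Hi ∈ S, (blockGraphOf G).IsCutVertex Hi
    · obtain ⟨Hi, hHi, hcutHi⟩ := h
      exact ⟨Hi, hHi, fun Hj hHj hcutHj => hleaf.2 ⟨hHj, hcutHj⟩ ⟨hHi, hcutHi⟩⟩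
    · obtain ⟨Hi, hHi, -⟩ := hS
      exact ⟨Hi, hHi, fun Hj hHj hcutHj => (h ⟨Hj, hHj, hcutHj⟩).elim⟩
  refine ⟨Hi, hHi, fun Hj hHj hHjHi w hw hwv B hB hwB =>
    by_contra fun hBHj => hHjHi (hcut Hj hHj ?_)⟩
  obtain ⟨Hk, hHk, hHkHj⟩ := hS.exists_ne Hj
  have hvHk : v ∈ Hk.1 ∩ Hj.1 := by rw [hv Hk Hj hHk hHj hHkHj]; rfl
  exact isCutVertex_blockGraphOf (B := ⟨B, hB⟩) (fun h => hBHj (congrArg Subtype.val h))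
    hHkHj hwv hw hwB hvHk.2 hvHk.1

/-- **Step in Jayanthan–Sarkar, Lemma 3.1.** Let `G` be a connected graph with at least
two blocks, each block a cycle or a clique.  Let `S` be a leaf of the block graph `B(G)`
(a block of `B(G)` with at most one cut vertex of `B(G)`), consisting of at least two
blocks of `G` which pairwise intersect exactly in a common cut vertex `v`.  Then there is
a block `Hᵢ ∈ S` such that for every other block `Hⱼ ∈ S`, the vertices of `Hⱼ` other
than `v` lie in no block of `G` other than `Hⱼ`. -/
theorem exists_block_of_leaf {V : Type*} [Fintype V]
    (G : SimpleGraph V) (hconn : G.Connected)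
    (hblocks : ∀ B : Set V, G.IsBlock B →
      (∃ r : ℕ, 3 ≤ r ∧ Nonempty ((G.induce B) ≃g cycleGraph r)) ∨ G.IsClique B)
    (htwo : ∃ B₁ B₂ : Set V, G.IsBlock B₁ ∧ G.IsBlock B₂ ∧ B₁ ≠ B₂)
    (S : Set {B : Set V // G.IsBlock B})
    (hleaf : (blockGraphOf G).IsBlock S ∧
      {b | b ∈ S ∧ (blockGraphOf G).IsCutVertex b}.Subsingleton)
    (hS : S.Nontrivial) (v : V)
    (hv : ∀ b₁ b₂, b₁ ∈ S → b₂ ∈ S → b₁ ≠ b₂ → b₁.1 ∩ b₂.1 = {v}) :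
    ∃ Hi ∈ S, ∀ Hj ∈ S, Hj ≠ Hi →
      ∀ w ∈ Hj.1, w ≠ v → ∀ B : Set V, G.IsBlock B → w ∈ B → B = Hj.1 :=
  exists_block_of_leaf_general G S hleaf hS v hv
end
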